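/- Let X be an (nT)×(MT) matrix, W ∈ ℝ^{nT}, y = Xβ* + W, λ > 0, and β̂ a minimizer of (1/(nT))‖Xβ − y‖² + 2λ‖β‖_{2,1}. Suppose (1/(nT))‖XᵀW‖_{2,∞} ≤ λ/2, Assumption RE(s) holds with constant κ > 0 (i.e., Δᵀ XᵀXΔ ≥ n·κ²‖Δ_J‖² for all |J| ≤ s and all Δ with ‖Δ_{J^c}‖_{2,1} ≤ 3‖Δ_J‖_{2,1}), and |J(β*)| ≤ s. Then (1/(nT))‖X(β̂ − β*)‖² ≤ 16 λ² s T / κ², and (1/√T)‖β̂ − β*‖_{2,1} ≤ 16 λ s √T / κ². -/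

import Mathlib

open scoped BigOperators Classical
open Matrix

noncomputable def blk {M T : ℕ} (β : Fin M × Fin T → ℝ) (j : Fin M) :
    EuclideanSpace ℝ (Fin T) := WithLp.toLp 2 (fun t => β (j, t))

noncomputable def norm21 {M T : ℕ} (β : Fin M × Fin T → ℝ) : ℝ := ∑ j, ‖blk β j‖

noncomputable def norm2inf {M T : ℕ} (β : Fin M × Fin T → ℝ) : ℝ :=
  ‖(fun j => ‖blk β j‖ : Fin M → ℝ)‖

/-!
Write `Δ = β̂ - β*` and let `J` be the support of `β*`. Comparing the objective at `β̂` and `β*`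
and bounding the noise term by the duality of `‖·‖_{2,1}` and `‖·‖_{2,∞}` gives
`(1/(nT))‖XΔ‖² ≤ 3λ‖Δ_J‖_{2,1} - λ‖Δ_{Jᶜ}‖_{2,1}`. Hence `Δ` lies in the cone of the RE
assumption, and RE together with Cauchy–Schwarz over the `s` blocks of `J` gives
`κ²‖Δ_J‖²_{2,1} ≤ sT · (1/(nT))‖XΔ‖²`. Both bounds then follow by elementary algebra.
-/

open Finset

section GroupNorms

variable {M T : ℕ}

theorem blk_sub (β β' : Fin M × Fin T → ℝ) (j : Fin M) :
    blk (β - β') j = blk β j - blk β' j := by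
  rw [blk, blk, blk, ← WithLp.toLp_sub]
  rfl

theorem norm_blk_le_norm2inf (V : Fin M × Fin T → ℝ) (j : Fin M) : ‖blk V j‖ ≤ norm2inf V := by
  simpa [norm2inf] using norm_le_pi_norm (fun j => ‖blk V j‖) j

theorem dotProduct_le_norm21_mul_norm2inf (Δ V : Fin M × Fin T → ℝ) :
    Δ ⬝ᵥ V ≤ norm21 Δ * norm2inf V := by
  calc Δ ⬝ᵥ V = ∑ j, inner ℝ (blk Δ j) (blk V j) := by
        simp [dotProduct, Fintype.sum_prod_type, blk, PiLp.inner_apply, mul_comm]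
    _ ≤ ∑ j, ‖blk Δ j‖ * ‖blk V j‖ := sum_le_sum fun j _ => real_inner_le_norm _ _
    _ ≤ ∑ j, ‖blk Δ j‖ * norm2inf V := by
        gcongr with j
        exact norm_blk_le_norm2inf V j
    _ = norm21 Δ * norm2inf V := (sum_mul _ _ _).symm

theorem norm21_nonneg (β : Fin M × Fin T → ℝ) : 0 ≤ norm21 β :=
  sum_nonneg fun _ _ => norm_nonneg _

theorem norm21_eq_sum_add_sum_compl (β : Fin M × Fin T → ℝ) (J : Finset (Fin M)) :
    norm21 β = ∑ j ∈ J, ‖blk β j‖ + ∑ j ∈ Jᶜ, ‖blk β j‖ :=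
  (sum_add_sum_compl J _).symm

theorem norm21_sub_norm21_le (J : Finset (Fin M)) {βstar : Fin M × Fin T → ℝ}
    (hβstar : ∀ j ∉ J, blk βstar j = 0) (β : Fin M × Fin T → ℝ) :
    norm21 βstar - norm21 β ≤
      ∑ j ∈ J, ‖blk (β - βstar) j‖ - ∑ j ∈ Jᶜ, ‖blk (β - βstar) j‖ := by
  have hstar : norm21 βstar = ∑ j ∈ J, ‖blk βstar j‖ := by
    rw [norm21_eq_sum_add_sum_compl βstar J, add_eq_left]
    exact sum_eq_zero fun j hj => by rw [hβstar j (mem_compl.1 hj), norm_zero]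
  have hβ : norm21 β = ∑ j ∈ J, ‖blk β j‖ + ∑ j ∈ Jᶜ, ‖blk (β - βstar) j‖ := by
    rw [norm21_eq_sum_add_sum_compl β J]
    congr 1
    exact sum_congr rfl fun j hj => by rw [blk_sub, hβstar j (mem_compl.1 hj), sub_zero]
  have hJ : ∑ j ∈ J, ‖blk βstar j‖ - ∑ j ∈ J, ‖blk β j‖ ≤ ∑ j ∈ J, ‖blk (β - βstar) j‖ := by
    rw [← sum_sub_distrib]
    gcongr with j
    rw [blk_sub, norm_sub_rev]
    exact norm_sub_norm_le _ _
  linarith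

theorem two_mul_dotProduct_mulVec_le {m : Type*} [Fintype m] (X : Matrix m (Fin M × Fin T) ℝ)
    (Δ : Fin M × Fin T → ℝ) (W : m → ℝ) {c lam : ℝ} (hc : 0 ≤ c)
    (hW : c * norm2inf (Xᵀ *ᵥ W) ≤ lam / 2) :
    2 * c * ((X *ᵥ Δ) ⬝ᵥ W) ≤ lam * norm21 Δ := by
  rw [dotProduct_comm, ← dotProduct_transpose_mulVec]
  calc 2 * c * (Δ ⬝ᵥ Xᵀ *ᵥ W) ≤ 2 * c * (norm21 Δ * norm2inf (Xᵀ *ᵥ W)) := by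
        gcongr; exact dotProduct_le_norm21_mul_norm2inf _ _
    _ = 2 * (c * norm2inf (Xᵀ *ᵥ W)) * norm21 Δ := by ring
    _ ≤ 2 * (lam / 2) * norm21 Δ := by gcongr; exact norm21_nonneg Δ
    _ = lam * norm21 Δ := by ring

theorem sq_sum_norm_blk_le_of_card_le {J : Finset (Fin M)} {s : ℕ} (hJ : #J ≤ s)
    (Δ : Fin M × Fin T → ℝ) {n κ A : ℝ} (hn : 0 < n)
    (hRE : n * κ ^ 2 * ∑ j ∈ J, ‖blk Δ j‖ ^ 2 ≤ A) :
    κ ^ 2 * (∑ j ∈ J, ‖blk Δ j‖) ^ 2 ≤ s * A / n := by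
  have hCS : (∑ j ∈ J, ‖blk Δ j‖) ^ 2 ≤ s * ∑ j ∈ J, ‖blk Δ j‖ ^ 2 :=
    (sq_sum_le_card_mul_sum_sq ..).trans (by gcongr)
  rw [le_div_iff₀ hn]
  calc κ ^ 2 * (∑ j ∈ J, ‖blk Δ j‖) ^ 2 * n ≤ n * κ ^ 2 * (s * ∑ j ∈ J, ‖blk Δ j‖ ^ 2) := by
        rw [mul_comm, ← mul_assoc]; gcongr
    _ = s * (n * κ ^ 2 * ∑ j ∈ J, ‖blk Δ j‖ ^ 2) := by ring
    _ ≤ s * A := by gcongr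

end GroupNorms

theorem basic_inequality {m p : Type*} [Fintype m] [Fintype p] (X : Matrix m p ℝ)
    (βstar βhat : p → ℝ) (W y : m → ℝ) (hy : y = X *ᵥ βstar + W) (c : ℝ)
    (pen : (p → ℝ) → ℝ)
    (hmin : c * ∑ i, ((X *ᵥ βhat) i - y i) ^ 2 + pen βhat ≤
      c * ∑ i, ((X *ᵥ βstar) i - y i) ^ 2 + pen βstar) :
    c * ∑ i, (X *ᵥ (βhat - βstar)) i ^ 2 ≤
      2 * c * ((X *ᵥ (βhat - βstar)) ⬝ᵥ W) + (pen βstar - pen βhat) := by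
  set u := X *ᵥ (βhat - βstar)
  have hfit : ∀ i, (X *ᵥ βhat) i - y i = u i - W i := fun i => by
    simp only [u, hy, mulVec_sub, Pi.add_apply, Pi.sub_apply]
    ring
  have hnoise : ∀ i, (X *ᵥ βstar) i - y i = -W i := fun i => by
    simp only [hy, Pi.add_apply]
    ring
  have hexpand : ∑ i, (u i - W i) ^ 2 = ∑ i, u i ^ 2 - 2 * (u ⬝ᵥ W) + ∑ i, (-W i) ^ 2 := by
    simp only [dotProduct, mul_sum, ← sum_sub_distrib, ← sum_add_distrib]
    exact sum_congr rfl fun i _ => by ring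
  simp only [hfit, hnoise, hexpand] at hmin
  linear_combination hmin

theorem lasso_bounds_of_cone {P a b lam κ C : ℝ} (hP : 0 ≤ P) (hb : 0 ≤ b) (hlam : 0 ≤ lam)
    (hκ : 0 < κ) (hC : 0 ≤ C) (hmain : P ≤ 3 * lam * a - lam * b) (hcone : b ≤ 3 * a)
    (hcompat : κ ^ 2 * a ^ 2 ≤ C * P) :
    P ≤ 16 * lam ^ 2 * C / κ ^ 2 ∧ a + b ≤ 16 * lam * C / κ ^ 2 := by
  have ha : 0 ≤ a := by linarith
  have hPa : P ≤ 4 * lam * a := by nlinarith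
  have haC : κ ^ 2 * a ≤ 4 * lam * C := by
    rcases ha.eq_or_lt with rfl | ha
    · simp only [mul_zero]; positivity
    · refine le_of_mul_le_mul_right ?_ ha
      nlinarith
  have ha' : a ≤ 4 * lam * C / κ ^ 2 := by
    rw [le_div_iff₀ (by positivity)]; linarith
  constructor
  · calc P ≤ 4 * lam * a := hPa
      _ ≤ 4 * lam * (4 * lam * C / κ ^ 2) := by gcongr
      _ = 16 * lam ^ 2 * C / κ ^ 2 := by ring
  · calc a + b ≤ 4 * a := by linarith
      _ ≤ 4 * (4 * lam * C / κ ^ 2) := by gcongr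
      _ = 16 * lam * C / κ ^ 2 := by ring

theorem stmt_12 (n T M s : ℕ) (hn : 0 < n) (hT : 0 < T)
    (X : Matrix (Fin (n * T)) (Fin M × Fin T) ℝ)
    (βstar βhat : Fin M × Fin T → ℝ) (W : Fin (n * T) → ℝ)
    (y : Fin (n * T) → ℝ) (hy : y = X.mulVec βstar + W)
    (lam : ℝ) (hlam : 0 < lam) (κ : ℝ) (hκ : 0 < κ)
    (hmin : ∀ β : Fin M × Fin T → ℝ,
        (1 / (n * T : ℝ)) * ∑ i, (X.mulVec βhat i - y i) ^ 2 +
          2 * lam * norm21 βhat ≤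
        (1 / (n * T : ℝ)) * ∑ i, (X.mulVec β i - y i) ^ 2 + 2 * lam * norm21 β)
    (hW : (1 / (n * T : ℝ)) * norm2inf (Xᵀ.mulVec W) ≤ lam / 2)
    (hRE : ∀ (J : Finset (Fin M)), J.card ≤ s →
        ∀ Δ : Fin M × Fin T → ℝ,
          ∑ j ∈ Jᶜ, ‖blk Δ j‖ ≤ 3 * ∑ j ∈ J, ‖blk Δ j‖ →
          (n : ℝ) * κ ^ 2 * ∑ j ∈ J, ‖blk Δ j‖ ^ 2 ≤ ∑ i, (X.mulVec Δ i) ^ 2)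
    (hsparse : (Finset.univ.filter (fun j => blk βstar j ≠ 0)).card ≤ s) :
    (1 / (n * T : ℝ)) * ∑ i, (X.mulVec βhat i - X.mulVec βstar i) ^ 2 ≤
        16 * lam ^ 2 * s * T / κ ^ 2 ∧
    (1 / Real.sqrt T) * norm21 (βhat - βstar) ≤
        16 * lam * s * Real.sqrt T / κ ^ 2 := by
  set Δ := βhat - βstar
  set J := univ.filter (fun j => blk βstar j ≠ 0)
  set c : ℝ := 1 / (n * T : ℝ)
  set A := ∑ i, (X *ᵥ Δ) i ^ 2
  set a := ∑ j ∈ J, ‖blk Δ j‖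
  set b := ∑ j ∈ Jᶜ, ‖blk Δ j‖
  have hbasic :
      c * A ≤ 2 * c * ((X *ᵥ Δ) ⬝ᵥ W) + (2 * lam * norm21 βstar - 2 * lam * norm21 βhat) :=
    basic_inequality X βstar βhat W y hy c (fun β => 2 * lam * norm21 β) (hmin βstar)
  have hnoise : 2 * c * ((X *ᵥ Δ) ⬝ᵥ W) ≤ lam * (a + b) := by
    rw [← norm21_eq_sum_add_sum_compl]
    exact two_mul_dotProduct_mulVec_le X Δ W (by positivity) hW
  have hdecomp : norm21 βstar - norm21 βhat ≤ a - b :=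
    norm21_sub_norm21_le J (fun j hj => by simpa [J] using hj) βhat
  have hP : 0 ≤ c * A := by positivity
  have hmain : c * A ≤ 3 * lam * a - lam * b := by
    linarith [mul_le_mul_of_nonneg_left hdecomp hlam.le]
  have hcone : b ≤ 3 * a := le_of_mul_le_mul_left (by linarith) hlam
  have hcompat : κ ^ 2 * a ^ 2 ≤ (s * T) * (c * A) := by
    convert sq_sum_norm_blk_le_of_card_le hsparse Δ (by positivity) (hRE J hsparse Δ hcone)
      using 1
    simp only [c, A]
    field_simp
  obtain ⟨hpred, hest⟩ := lasso_bounds_of_cone hP (by positivity) hlam.le hκ (by positivity)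
    hmain hcone hcompat
  refine ⟨by simpa [A, Δ, mulVec_sub, mul_assoc] using hpred, ?_⟩
  calc 1 / √T * norm21 Δ ≤ 1 / √T * (16 * lam * (s * T) / κ ^ 2) := by
        rw [norm21_eq_sum_add_sum_compl Δ J]; gcongr
    _ = 16 * lam * s * (T / √T) / κ ^ 2 := by ring
    _ = 16 * lam * s * √T / κ ^ 2 := by rw [Real.div_sqrt]
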